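/- arXiv:1607.00752 — 6 statements merged into one kernel-verified Lean document; each statement's English description precedes it below -/
import Mathlib

section
/- The discrete KdV equation is self-adjoint: if u : ℤ² → ℝ solves (u(m,n) − u(m+1,n+1))·(u(m+1,n) − u(m,n+1)) = a(m) − b(n) with u(m,n) ≠ u(m+1,n+1) for all (m,n), then the substitution v(m,n) = (−1)^{m+n}·(u(m+1,n+1) − u(m,n)) satisfies the adjoint equation v(m−1,n) − v(m,n−1) + [(a(m) − b(n))/(u(m,n) − u(m+1,n+1))²]·v(m,n) − [(a(m−1) − b(n−1))/(u(m−1,n−1) − u(m,n))²]·v(m−1,n−1) = 0 at every point (m,n). -/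
/-- Self-adjointness of the discrete KdV (H1) equation: the substitution
v(m,n) = (−1)^(m+n)·(u(m+1,n+1) − u(m,n)) solves the adjoint equation on every
solution of the discrete KdV equation. -/
theorem discrete_KdV_self_adjoint (a b : ℤ → ℝ) (u : ℤ → ℤ → ℝ)
    (hne : ∀ m n : ℤ, u m n ≠ u (m + 1) (n + 1))
    (hsol : ∀ m n : ℤ,
      (u m n - u (m + 1) (n + 1)) * (u (m + 1) n - u m (n + 1)) = a m - b n) :
    ∀ m n : ℤ,
      (fun m n => ((-1 : ℝ)) ^ (m + n) * (u (m + 1) (n + 1) - u m n)) (m - 1) n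
      - (fun m n => ((-1 : ℝ)) ^ (m + n) * (u (m + 1) (n + 1) - u m n)) m (n - 1)
      + (a m - b n) / (u m n - u (m + 1) (n + 1)) ^ 2 *
          ((fun m n => ((-1 : ℝ)) ^ (m + n) * (u (m + 1) (n + 1) - u m n)) m n)
      - (a (m - 1) - b (n - 1)) / (u (m - 1) (n - 1) - u m n) ^ 2 *
          ((fun m n => ((-1 : ℝ)) ^ (m + n) * (u (m + 1) (n + 1) - u m n)) (m - 1) (n - 1))
      = 0 := by
  intro m n
  simp only
  have h1 := hsol m n
  have h2 := hsol (m - 1) (n - 1)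
  rw [sub_add_cancel, sub_add_cancel] at h2
  have hd1 : u m n - u (m + 1) (n + 1) ≠ 0 := sub_ne_zero.mpr (hne m n)
  have hd2 : u (m - 1) (n - 1) - u m n ≠ 0 := by
    have := hne (m - 1) (n - 1)
    rw [sub_add_cancel, sub_add_cancel] at this
    exact sub_ne_zero.mpr this
  rw [← h1, ← h2]
  have e1 : (m - 1) + n = (m + n) - 1 := by ring
  have e2 : m + (n - 1) = (m + n) - 1 := by ring
  have e3 : (m - 1) + (n - 1) = (m + n) - 2 := by ring
  rw [e1, e2, e3]
  have hm1 : ((-1 : ℝ)) ^ ((m + n) - 1) = -((-1 : ℝ)) ^ (m + n) := by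
    rw [zpow_sub_one₀ (by norm_num : (-1 : ℝ) ≠ 0)]
    norm_num
  have hm2 : ((-1 : ℝ)) ^ ((m + n) - 2) = ((-1 : ℝ)) ^ (m + n) := by
    have : (m + n) - 2 = ((m + n) - 1) - 1 := by ring
    rw [this, zpow_sub_one₀ (by norm_num : (-1 : ℝ) ≠ 0), hm1]
    norm_num
  rw [hm1, hm2]
  
  field_simp
  ring
end

section
/- The integrable lattice equation u' = 1/(u₁ − u) + 1/(u − u₋₁) is self-adjoint under v = (−1)ⁿ u: if u is a differentiable solution with u(t,n+1) ≠ u(t,n) for all (t,n), then v(t,n) = (−1)ⁿ u(t,n) satisfies −v' − (v₁ + v)/(u₁ − u)² + (v + v₋₁)/(u − u₋₁)² = 0 at every point. -/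
/-- Self-adjointness of u' = 1/(u₁ − u) + 1/(u − u₋₁) under v = (−1)ⁿ u. -/
theorem lattice_self_adjoint (u : ℝ → ℤ → ℝ)
    (hd : ∀ n, Differentiable ℝ (fun t => u t n))
    (hne : ∀ t (n : ℤ), u t (n + 1) ≠ u t n)
    (hsol : ∀ t (n : ℤ),
      deriv (fun s => u s n) t
        = 1 / (u t (n + 1) - u t n) + 1 / (u t n - u t (n - 1))) :
    ∀ t (n : ℤ),
      -(deriv (fun s => ((-1 : ℝ)) ^ n * u s n) t)
      - (((-1 : ℝ)) ^ (n + 1) * u t (n + 1) + ((-1 : ℝ)) ^ n * u t n)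
          / (u t (n + 1) - u t n) ^ 2
      + (((-1 : ℝ)) ^ n * u t n + ((-1 : ℝ)) ^ (n - 1) * u t (n - 1))
          / (u t n - u t (n - 1)) ^ 2
      = 0 := by
  intro t n
  have ha : u t (n + 1) - u t n ≠ 0 := sub_ne_zero.mpr (hne t n)
  have hb : u t n - u t (n - 1) ≠ 0 := by
    have := hne t (n - 1)
    rw [sub_add_cancel] at this
    exact sub_ne_zero.mpr this
  have hderiv : deriv (fun s => ((-1 : ℝ)) ^ n * u s n) t
      = ((-1 : ℝ)) ^ n * deriv (fun s => u s n) t := by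
    exact deriv_const_mul _ ((hd n) t)
  have hc : ((-1 : ℝ)) ≠ 0 := by norm_num
  rw [hderiv, hsol t n, zpow_add_one₀ hc, zpow_sub_one₀ hc]
  field_simp
  ring
end

section
/- For every smooth function u : ℝ × ℝ → ℝ, the identity D_t(u³/3 − u_x²) + D_x(u⁴/4 + u²u_{xx} + 2u_x u_t + u_{xx}²) = (u² + 2u_{xx})·(u_t + u u_x + u_{xxx}) holds; hence on solutions of the KdV equation u_t + u u_x + u_{xxx} = 0 the left-hand side vanishes (conservation of energy). -/
private lemma kdv_hasDerivAt_snd {f : ℝ × ℝ → ℝ} (hf : Differentiable ℝ f) (t x : ℝ) :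
    HasDerivAt (fun y => f (t, y)) (fderiv ℝ f (t, x) (0, 1)) x :=
  (hf (t, x)).hasFDerivAt.comp_hasDerivAt x ((hasDerivAt_const x t).prodMk (hasDerivAt_id x))

private lemma kdv_hasDerivAt_fst {f : ℝ × ℝ → ℝ} (hf : Differentiable ℝ f) (t x : ℝ) :
    HasDerivAt (fun s => f (s, x)) (fderiv ℝ f (t, x) (1, 0)) t :=
  (hf (t, x)).hasFDerivAt.comp_hasDerivAt t ((hasDerivAt_id t).prodMk (hasDerivAt_const t x))

private lemma kdv_contDiff_pderiv {f : ℝ × ℝ → ℝ} (hf : ContDiff ℝ (⊤ : ℕ∞) f) (v : ℝ × ℝ) :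
    ContDiff ℝ (⊤ : ℕ∞) (fun p => fderiv ℝ f p v) :=
  (hf.fderiv_right (by simp)).clm_apply contDiff_const

private lemma kdv_clairaut {f : ℝ × ℝ → ℝ} (hf : ContDiff ℝ (⊤ : ℕ∞) f) (p a b : ℝ × ℝ) :
    fderiv ℝ (fun q => fderiv ℝ f q b) p a = fderiv ℝ (fun q => fderiv ℝ f q a) p b := by
  have hF : Differentiable ℝ (fderiv ℝ f) := (hf.fderiv_right (m := (⊤ : ℕ∞)) (by simp)).differentiable (by simp)
  have h : ∀ v : ℝ × ℝ, fderiv ℝ (fun q => fderiv ℝ f q v) p =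
      (ContinuousLinearMap.apply ℝ ℝ v).comp (fderiv ℝ (fderiv ℝ f) p) := fun v =>
    ((ContinuousLinearMap.apply ℝ ℝ v).hasFDerivAt.comp p (hF p).hasFDerivAt).fderiv
  rw [h, h]
  simp only [ContinuousLinearMap.comp_apply, ContinuousLinearMap.apply_apply]
  exact second_derivative_symmetric (fun y => (hf.differentiable (by simp) y).hasFDerivAt)
    (hF p).hasFDerivAt a b

/-- Conservation of energy for the KdV equation:
D_t(u³/3 − u_x²) + D_x(u⁴/4 + u²u_{xx} + 2u_x u_t + u_{xx}²)
  = (u² + 2u_{xx})·(u_t + u u_x + u_{xxx}) identically for smooth u. -/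
theorem kdv_conservation_energy (u : ℝ → ℝ → ℝ)
    (hu : ContDiff ℝ (⊤ : ℕ∞) (fun p : ℝ × ℝ => u p.1 p.2)) :
    (∀ t x : ℝ,
      deriv (fun s => (u s x) ^ 3 / 3 - (deriv (fun y => u s y) x) ^ 2) t
      + deriv (fun y => (u t y) ^ 4 / 4
          + (u t y) ^ 2 * deriv (fun z => deriv (fun w => u t w) z) y
          + 2 * deriv (fun z => u t z) y * deriv (fun s => u s y) t
          + (deriv (fun z => deriv (fun w => u t w) z) y) ^ 2) x
      = ((u t x) ^ 2 + 2 * deriv (fun z => deriv (fun w => u t w) z) x) *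
          (deriv (fun s => u s x) t + u t x * deriv (fun y => u t y) x
            + deriv (fun y => deriv (fun z => deriv (fun w => u t w) z) y) x)) ∧
    ((∀ t x : ℝ,
        deriv (fun s => u s x) t + u t x * deriv (fun y => u t y) x
          + deriv (fun y => deriv (fun z => deriv (fun w => u t w) z) y) x = 0) →
      ∀ t x : ℝ,
        deriv (fun s => (u s x) ^ 3 / 3 - (deriv (fun y => u s y) x) ^ 2) t
        + deriv (fun y => (u t y) ^ 4 / 4
            + (u t y) ^ 2 * deriv (fun z => deriv (fun w => u t w) z) y
            + 2 * deriv (fun z => u t z) y * deriv (fun s => u s y) t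
            + (deriv (fun z => deriv (fun w => u t w) z) y) ^ 2) x = 0) := by
  have hU : ContDiff ℝ (⊤ : ℕ∞) (fun p : ℝ × ℝ => u p.1 p.2) := hu
  set U : ℝ × ℝ → ℝ := fun p => u p.1 p.2 with hUdef
  have hux : ContDiff ℝ (⊤ : ℕ∞) (fun p => fderiv ℝ U p (0, 1)) := kdv_contDiff_pderiv hU _
  have hut : ContDiff ℝ (⊤ : ℕ∞) (fun p => fderiv ℝ U p (1, 0)) := kdv_contDiff_pderiv hU _
  set ux : ℝ × ℝ → ℝ := fun p => fderiv ℝ U p (0, 1) with hux_def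
  set ut : ℝ × ℝ → ℝ := fun p => fderiv ℝ U p (1, 0) with hut_def
  have huxx : ContDiff ℝ (⊤ : ℕ∞) (fun p => fderiv ℝ ux p (0, 1)) := kdv_contDiff_pderiv hux _
  set uxx : ℝ × ℝ → ℝ := fun p => fderiv ℝ ux p (0, 1) with huxx_def
  set uxxx : ℝ × ℝ → ℝ := fun p => fderiv ℝ uxx p (0, 1) with huxxx_def
  set utx : ℝ × ℝ → ℝ := fun p => fderiv ℝ ut p (0, 1) with hutx_def
  -- first derivatives pointwise
  have h1 : ∀ t x : ℝ, deriv (fun y => u t y) x = ux (t, x) := fun t x =>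
    (kdv_hasDerivAt_snd (hU.differentiable (by simp)) t x).deriv
  have h4 : ∀ t x : ℝ, deriv (fun s => u s x) t = ut (t, x) := fun t x =>
    (kdv_hasDerivAt_fst (hU.differentiable (by simp)) t x).deriv
  have h2 : ∀ t x : ℝ, deriv (fun z => deriv (fun w => u t w) z) x = uxx (t, x) := by
    intro t x
    have e : (fun z => deriv (fun w => u t w) z) = fun z => ux (t, z) :=
      funext fun z => h1 t z
    rw [e]
    exact (kdv_hasDerivAt_snd (hux.differentiable (by simp)) t x).deriv
  have h3 : ∀ t x : ℝ,
      deriv (fun y => deriv (fun z => deriv (fun w => u t w) z) y) x = uxxx (t, x) := by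
    intro t x
    have e : (fun y => deriv (fun z => deriv (fun w => u t w) z) y) = fun y => uxx (t, y) :=
      funext fun y => h2 t y
    rw [e]
    exact (kdv_hasDerivAt_snd (huxx.differentiable (by simp)) t x).deriv
  -- Clairaut
  have hcl : ∀ t x : ℝ, fderiv ℝ ux (t, x) (1, 0) = utx (t, x) := fun t x =>
    kdv_clairaut hU (t, x) (1, 0) (0, 1)
  -- time derivative
  have hT : ∀ t x : ℝ,
      deriv (fun s => (u s x) ^ 3 / 3 - (deriv (fun y => u s y) x) ^ 2) t
        = U (t, x) ^ 2 * ut (t, x) - 2 * ux (t, x) * utx (t, x) := by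
    intro t x
    have e : (fun s => (u s x) ^ 3 / 3 - (deriv (fun y => u s y) x) ^ 2)
        = fun s => U (s, x) ^ 3 / 3 - (ux (s, x)) ^ 2 := funext fun s => by rw [h1 s x]
    rw [e]
    have hA : HasDerivAt (fun s => U (s, x)) (ut (t, x)) t :=
      kdv_hasDerivAt_fst (hU.differentiable (by simp)) t x
    have hB : HasDerivAt (fun s => ux (s, x)) (fderiv ℝ ux (t, x) (1, 0)) t :=
      kdv_hasDerivAt_fst (hux.differentiable (by simp)) t x
    rw [show deriv (fun s => U (s, x) ^ 3 / 3 - ux (s, x) ^ 2) t = _ from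
      (((hA.pow 3).div_const 3).sub (hB.pow 2)).deriv, hcl t x]
    norm_num
    ring
  -- space derivative
  have hX : ∀ t x : ℝ,
      deriv (fun y => (u t y) ^ 4 / 4
          + (u t y) ^ 2 * deriv (fun z => deriv (fun w => u t w) z) y
          + 2 * deriv (fun z => u t z) y * deriv (fun s => u s y) t
          + (deriv (fun z => deriv (fun w => u t w) z) y) ^ 2) x
        = U (t, x) ^ 3 * ux (t, x)
          + (2 * U (t, x) * ux (t, x) * uxx (t, x) + U (t, x) ^ 2 * uxxx (t, x))
          + (2 * uxx (t, x) * ut (t, x) + 2 * ux (t, x) * utx (t, x))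
          + 2 * uxx (t, x) * uxxx (t, x) := by
    intro t x
    have e : (fun y => (u t y) ^ 4 / 4
          + (u t y) ^ 2 * deriv (fun z => deriv (fun w => u t w) z) y
          + 2 * deriv (fun z => u t z) y * deriv (fun s => u s y) t
          + (deriv (fun z => deriv (fun w => u t w) z) y) ^ 2)
        = fun y => U (t, y) ^ 4 / 4 + U (t, y) ^ 2 * uxx (t, y)
          + 2 * ux (t, y) * ut (t, y) + (uxx (t, y)) ^ 2 :=
      funext fun y => by rw [h1 t y, h2 t y, h4 t y]
    rw [e]
    have hA : HasDerivAt (fun y => U (t, y)) (ux (t, x)) x :=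
      kdv_hasDerivAt_snd (hU.differentiable (by simp)) t x
    have hB : HasDerivAt (fun y => ux (t, y)) (uxx (t, x)) x :=
      kdv_hasDerivAt_snd (hux.differentiable (by simp)) t x
    have hC : HasDerivAt (fun y => uxx (t, y)) (uxxx (t, x)) x :=
      kdv_hasDerivAt_snd (huxx.differentiable (by simp)) t x
    have hD : HasDerivAt (fun y => ut (t, y)) (utx (t, x)) x :=
      kdv_hasDerivAt_snd (hut.differentiable (by simp)) t x
    have hmain : deriv (fun y => U (t, y) ^ 4 / 4 + U (t, y) ^ 2 * uxx (t, y)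
        + 2 * ux (t, y) * ut (t, y) + (uxx (t, y)) ^ 2) x = _ := (((((hA.pow 4).div_const 4).add ((hA.pow 2).mul hC)).add
        ((hB.const_mul 2).mul hD)).add (hC.pow 2)).deriv
    rw [hmain]
    norm_num
    ring
  have main : ∀ t x : ℝ,
      deriv (fun s => (u s x) ^ 3 / 3 - (deriv (fun y => u s y) x) ^ 2) t
      + deriv (fun y => (u t y) ^ 4 / 4
          + (u t y) ^ 2 * deriv (fun z => deriv (fun w => u t w) z) y
          + 2 * deriv (fun z => u t z) y * deriv (fun s => u s y) t
          + (deriv (fun z => deriv (fun w => u t w) z) y) ^ 2) x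
      = ((u t x) ^ 2 + 2 * deriv (fun z => deriv (fun w => u t w) z) x) *
          (deriv (fun s => u s x) t + u t x * deriv (fun y => u t y) x
            + deriv (fun y => deriv (fun z => deriv (fun w => u t w) z) y) x) := by
    intro t x
    rw [hT t x, hX t x, h1 t x, h2 t x, h3 t x, h4 t x]
    show _ = (U (t, x) ^ 2 + 2 * uxx (t, x)) * (ut (t, x) + U (t, x) * ux (t, x) + uxxx (t, x))
    ring
  refine ⟨main, fun hkdv t x => ?_⟩
  rw [main t x]
  have := hkdv t x
  rw [this, mul_zero]
end

section
/- For the time-discretised KdV equation (u₁ − u₋₁)/2 + u u' + u''' = 0, the identity (S − id)(u·u₋₁/2) + D_x(u³/3 + u·u'' − (u')²/2) = u·((u₁ − u₋₁)/2 + u u' + u''') holds identically for every u : ℝ × ℤ → ℝ smooth in x; hence the left-hand side vanishes on solutions. -/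
/-- Conservation law of the time-discretised KdV equation with characteristic u:
(S − id)(u·u₋₁/2) + D_x(u³/3 + u u'' − (u')²/2)
  = u·((u₁ − u₋₁)/2 + u u' + u''') identically. -/
theorem time_discrete_kdv_conservation_momentum (u : ℝ → ℤ → ℝ)
    (hs : ∀ n, ContDiff ℝ (⊤ : ℕ∞) (fun x => u x n)) :
    ∀ x (n : ℤ),
      ((u x (n + 1) * u x ((n + 1) - 1) / 2) - (u x n * u x (n - 1) / 2))
      + deriv (fun y => (u y n) ^ 3 / 3
          + u y n * deriv (fun z => deriv (fun w => u w n) z) y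
          - (deriv (fun z => u z n) y) ^ 2 / 2) x
      = u x n * ((u x (n + 1) - u x (n - 1)) / 2
          + u x n * deriv (fun y => u y n) x
          + deriv (fun y => deriv (fun z => deriv (fun w => u w n) z) y) x) := by
  intro x n
  have hf : ContDiff ℝ (⊤ : ℕ∞) (fun x => u x n) := hs n
  have hf1 : ContDiff ℝ ((⊤ : ℕ∞) : WithTop ℕ∞) (deriv (fun x => u x n)) :=
    (contDiff_infty_iff_deriv.mp (hf.of_le (by simp))).2
  have hf2 : ContDiff ℝ ((⊤ : ℕ∞) : WithTop ℕ∞) (deriv (deriv (fun x => u x n))) :=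
    (contDiff_infty_iff_deriv.mp hf1).2
  have df : Differentiable ℝ (fun x => u x n) := hf.differentiable (by simp)
  have df1 : Differentiable ℝ (deriv (fun x => u x n)) := hf1.differentiable (by simp)
  have df2 : Differentiable ℝ (deriv (deriv (fun x => u x n))) := hf2.differentiable (by simp)
  have hd : deriv (fun y => (u y n) ^ 3 / 3
      + u y n * deriv (fun z => deriv (fun w => u w n) z) y
      - (deriv (fun z => u z n) y) ^ 2 / 2) x
      = (u x n) ^ 2 * deriv (fun y => u y n) x
        + u x n * deriv (deriv (deriv (fun w => u w n))) x := by
    have h1 : HasDerivAt (fun y => (u y n) ^ 3 / 3)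
        ((3 : ℕ) * (u x n) ^ 2 * deriv (fun y => u y n) x / 3) x :=
      (((df x).hasDerivAt.pow 3)).div_const 3
    have h2 : HasDerivAt (fun y => u y n * deriv (fun z => deriv (fun w => u w n) z) y)
        (deriv (fun y => u y n) x * deriv (deriv (fun w => u w n)) x
          + u x n * deriv (deriv (deriv (fun w => u w n))) x) x :=
      (df x).hasDerivAt.mul (df2 x).hasDerivAt
    have h3 : HasDerivAt (fun y => (deriv (fun z => u z n) y) ^ 2 / 2)
        ((2 : ℕ) * (deriv (fun z => u z n) x) ^ 1 * deriv (deriv (fun w => u w n)) x / 2) x :=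
      ((df1 x).hasDerivAt.pow 2).div_const 2
    have := ((h1.add h2).sub h3).deriv
    refine this.trans ?_
    ring
  rw [hd]
  have : ((n : ℤ) + 1) - 1 = n := by ring
  rw [this]
  ring
end

section
/- Every Lie point symmetry generator X = ξ(t,n,u)∂_t + φ(t,n,u)∂_u of the Volterra equation u' = u·(u₁ − u₋₁) (acting on positive solutions) is a linear combination of X₁ = −t∂_t + u∂_u, X₂ = (−1)ⁿ t ∂_t + (−1)ⁿ u ∂_u, and X₃ = c₃(n)∂_t for an arbitrary function c₃ : ℤ → ℝ; that is, the linearized symmetry condition forces ξ = (−c₁ + c₂(−1)ⁿ)t + c₃(n) and φ = (c₁ + c₂(−1)ⁿ)u for constants c₁, c₂. -/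
open Set

lemma aux_const_on_Ioi {f : ℝ → ℝ} (hf : Differentiable ℝ f)
    (h : ∀ x ∈ Set.Ioi (0:ℝ), deriv f x = 0) {a : ℝ} (ha : 0 < a) : f a = f 1 := by
  refine (convex_Ioi (0:ℝ)).is_const_of_fderivWithin_eq_zero hf.differentiableOn
    (fun x hx => ?_) ha (by norm_num)
  rw [fderivWithin_of_isOpen isOpen_Ioi hx, ← toSpanSingleton_deriv, h x hx]
  ext
  simp

lemma aux_linear_of_deriv_const {f : ℝ → ℝ} (hf : Differentiable ℝ f) (c : ℝ)
    (h : ∀ t, deriv f t = c) : ∀ t, f t = f 0 + c * t := by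
  intro t
  have hg : Differentiable ℝ (fun t => f t - c * t) :=
    hf.sub (differentiable_id.const_mul c)
  have hg' : ∀ x, deriv (fun t => f t - c * t) x = 0 := by
    intro x
    have h1 : DifferentiableAt ℝ (fun t : ℝ => c * t) x :=
      (differentiable_id.const_mul c) x
    rw [deriv_fun_sub (hf x) h1, h x, deriv_const_mul_field]
    simp
  have := is_const_of_deriv_eq_zero hg hg' t 0
  simp at this
  linarith [this]

lemma aux_deriv_affine {f : ℝ → ℝ} {m b a : ℝ} (ha : 0 < a)
    (h : ∀ x ∈ Set.Ioi (0:ℝ), f x = m * x + b) : deriv f a = m := by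
  have heq : f =ᶠ[nhds a] fun x => m * x + b :=
    Filter.eventuallyEq_of_mem (isOpen_Ioi.mem_nhds ha) h
  rw [heq.deriv_eq, deriv_add_const, deriv_const_mul_field, deriv_id'']
  simp
/-- Classification of Lie point symmetries of the Volterra equation: the
linearized symmetry condition forces ξ = (−c₁ + c₂(−1)ⁿ)t + c₃(n) and
φ = (c₁ + c₂(−1)ⁿ)u on the domain u > 0. -/
theorem volterra_point_symmetry_classification
    (ξ φ : ℝ → ℤ → ℝ → ℝ)
    (hξ : ∀ n : ℤ, ContDiff ℝ (⊤ : ℕ∞) (fun p : ℝ × ℝ => ξ p.1 n p.2))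
    (hφ : ∀ n : ℤ, ContDiff ℝ (⊤ : ℕ∞) (fun p : ℝ × ℝ => φ p.1 n p.2))
    (hlsc : ∀ (t : ℝ) (n : ℤ) (a a₁ am1 : ℝ),
      0 < a → 0 < a₁ → 0 < am1 →
      -(φ t n a / a) * (a₁ - am1)
        + (deriv (fun s => φ s n a) t) / a
        + (deriv (fun w => φ t n w) a) * (a₁ - am1)
        - ((deriv (fun s => ξ s n a) t)
            + (deriv (fun w => ξ t n w) a) * a * (a₁ - am1)) * (a₁ - am1)
        - φ t (n + 1) a₁ + φ t (n - 1) am1 = 0) :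
    ∃ c₁ c₂ : ℝ, ∃ c₃ : ℤ → ℝ,
      ∀ (t : ℝ) (n : ℤ) (a : ℝ), 0 < a →
        ξ t n a = (-c₁ + c₂ * ((-1 : ℝ)) ^ n) * t + c₃ n ∧
        φ t n a = (c₁ + c₂ * ((-1 : ℝ)) ^ n) * a := by
  -- differentiability of partial maps
  have hφt : ∀ (n : ℤ) (a : ℝ), Differentiable ℝ (fun s => φ s n a) := fun n a =>
    ((hφ n).differentiable (by simp)).comp (differentiable_id.prodMk (differentiable_const a))
  have hξt : ∀ (n : ℤ) (a : ℝ), Differentiable ℝ (fun s => ξ s n a) := fun n a =>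
    ((hξ n).differentiable (by simp)).comp (differentiable_id.prodMk (differentiable_const a))
  have hξu : ∀ (n : ℤ) (t : ℝ), Differentiable ℝ (fun w => ξ t n w) := fun n t =>
    ((hξ n).differentiable (by simp)).comp ((differentiable_const t).prodMk differentiable_id)
  -- Step 1: ξ does not depend on u
  have hxu : ∀ (t : ℝ) (n : ℤ) (a : ℝ), 0 < a → deriv (fun w => ξ t n w) a = 0 := by
    intro t n a ha
    have h11 := hlsc t n a 1 1 ha one_pos one_pos
    have h21 := hlsc t n a 2 1 ha two_pos one_pos
    have h12 := hlsc t n a 1 2 ha one_pos two_pos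
    have h22 := hlsc t n a 2 2 ha two_pos two_pos
    have key : deriv (fun w => ξ t n w) a * a = 0 := by
      linear_combination (-(1:ℝ)/2) * h21 + (-(1:ℝ)/2) * h12 + (1/2 : ℝ) * h11 + (1/2 : ℝ) * h22
    rcases mul_eq_zero.mp key with h | h
    · exact h
    · exact absurd h (ne_of_gt ha)
  have hξconst : ∀ (t : ℝ) (n : ℤ) (a : ℝ), 0 < a → ξ t n a = ξ t n 1 :=
    fun t n a ha => aux_const_on_Ioi (hξu n t) (fun x hx => hxu t n x hx) ha
  -- Step 2: φ is affine in u, with matched slopes at n+1 and n-1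
  have L1 : ∀ (t : ℝ) (n : ℤ) (y : ℝ), 0 < y →
      φ t (n+1) y = φ t (n+1) 1 + (φ t (n+1) 2 - φ t (n+1) 1) * (y - 1) := by
    intro t n y hy
    have h11 := hlsc t n 1 1 1 one_pos one_pos one_pos
    have h21 := hlsc t n 1 2 1 one_pos two_pos one_pos
    have hy1 := hlsc t n 1 y 1 one_pos hy one_pos
    have hx := hxu t n 1 one_pos
    linear_combination (-1:ℝ) * hy1 + (2 - y) * h11 + (y - 1) * h21
      + ((y-1) - (y-1)^2) * hx
  have L2 : ∀ (t : ℝ) (n : ℤ) (z : ℝ), 0 < z →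
      φ t (n-1) z = φ t (n-1) 1 + (φ t (n+1) 2 - φ t (n+1) 1) * (z - 1) := by
    intro t n z hz
    have h11 := hlsc t n 1 1 1 one_pos one_pos one_pos
    have h21 := hlsc t n 1 2 1 one_pos two_pos one_pos
    have h1z := hlsc t n 1 1 z one_pos one_pos hz
    have hx := hxu t n 1 one_pos
    linear_combination h1z + (-z : ℝ) * h11 + (z - 1) * h21
      + ((1-z)^2 + (z-1)) * hx
  have slopeEq : ∀ (t : ℝ) (n : ℤ),
      φ t (n+1) 2 - φ t (n+1) 1 = φ t (n-1) 2 - φ t (n-1) 1 := by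
    intro t n
    have := L2 t n 2 two_pos
    linarith
  have affN : ∀ (t : ℝ) (m : ℤ) (y : ℝ), 0 < y →
      φ t m y = φ t m 1 + (φ t m 2 - φ t m 1) * (y - 1) := by
    intro t m y hy
    have := L1 t (m-1) y hy
    simpa using this
  have hpu : ∀ (t : ℝ) (n : ℤ) (a : ℝ), 0 < a →
      deriv (fun w => φ t n w) a = φ t n 2 - φ t n 1 := by
    intro t n a ha
    refine aux_deriv_affine (b := 2 * φ t n 1 - φ t n 2) ha ?_
    intro x hx
    have := affN t n x hx
    ring_nf
    ring_nf at this
    linarith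
  have hxt_eq : ∀ (t : ℝ) (n : ℤ) (a : ℝ), 0 < a →
      deriv (fun s => ξ s n a) t = deriv (fun s => ξ s n 1) t := by
    intro t n a ha
    have : (fun s => ξ s n a) = (fun s => ξ s n 1) := funext fun s => hξconst s n a ha
    rw [this]
  -- Step 3: φ t n a = φ t n 1 * a
  have hB : ∀ (t : ℝ) (n : ℤ) (a : ℝ), 0 < a → φ t n a = φ t n 1 * a := by
    intro t n a ha
    have h11 := hlsc t n a 1 1 ha one_pos one_pos
    have h21 := hlsc t n a 2 1 ha two_pos one_pos
    have h11' := hlsc t n 1 1 1 one_pos one_pos one_pos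
    have h21' := hlsc t n 1 2 1 one_pos two_pos one_pos
    have hxa := hxu t n a ha
    have hx1 := hxu t n 1 one_pos
    have hpua := hpu t n a ha
    have hpu1 := hpu t n 1 one_pos
    have hxta := hxt_eq t n a ha
    have key : φ t n a / a = φ t n 1 := by
      linear_combination (-1:ℝ) * h21 + h11 + h21' - h11' + hpua - hpu1 - hxta
        - a * hxa + hx1
    field_simp at key
    linarith [key]
  have hAval : ∀ (t : ℝ) (n : ℤ), φ t n 2 - φ t n 1 = φ t n 1 := by
    intro t n
    have := hB t n 2 two_pos
    linarith
  have hApar : ∀ (t : ℝ) (n : ℤ), φ t (n+1) 1 = φ t (n-1) 1 := by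
    intro t n
    have h0 := slopeEq t n
    have h1 := hAval t (n+1)
    have h2 := hAval t (n-1)
    linarith
  -- Step 4: φ t n 1 is independent of t
  have hpt : ∀ (t : ℝ) (n : ℤ), deriv (fun s => φ s n 1) t = 0 := by
    intro t n
    have h11 := hlsc t n 1 1 1 one_pos one_pos one_pos
    have := hApar t n
    linear_combination h11 + this
  have hAconst : ∀ (t : ℝ) (n : ℤ), φ t n 1 = φ 0 n 1 := by
    intro t n
    exact is_const_of_deriv_eq_zero (hφt n 1) (fun x => hpt x n) t 0
  -- Step 5: ∂ₜ ξ(t,n,1) = -φ 0 (n+1) 1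
  have hxt1 : ∀ (t : ℝ) (n : ℤ), deriv (fun s => ξ s n 1) t = -(φ 0 (n+1) 1) := by
    intro t n
    have h11 := hlsc t n 1 1 1 one_pos one_pos one_pos
    have h21 := hlsc t n 1 2 1 one_pos two_pos one_pos
    have hpu1 := hpu t n 1 one_pos
    have hx1 := hxu t n 1 one_pos
    have hb2 := hB t n 2 two_pos
    have hf := hAval t (n+1)
    have hc := hAconst t (n+1)
    linear_combination (-1:ℝ) * h21 + h11 + hpu1 + hb2 - hx1 - hf - hc
  have hξ1 : ∀ (t : ℝ) (n : ℤ), ξ t n 1 = ξ 0 n 1 + (-(φ 0 (n+1) 1)) * t := by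
    intro t n
    have := aux_linear_of_deriv_const (hξt n 1) (-(φ 0 (n+1) 1)) (fun s => hxt1 s n) t
    simpa using this
  -- Step 6: parity structure of A n := φ 0 n 1
  have hA2 : ∀ n : ℤ, φ 0 (n+2) 1 = φ 0 n 1 := by
    intro n
    have := hApar 0 (n+1)
    have e1 : n + 1 + 1 = n + 2 := by ring
    have e2 : n + 1 - 1 = n := by ring
    rw [e1, e2] at this
    exact this
  set c₁ : ℝ := (φ 0 0 1 + φ 0 1 1) / 2 with hc₁
  set c₂ : ℝ := (φ 0 0 1 - φ 0 1 1) / 2 with hc₂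
  have hm1 : ((-1 : ℝ)) ≠ 0 := by norm_num
  have hstep : ∀ n : ℤ, ((-1:ℝ)) ^ (n + 2) = ((-1:ℝ)) ^ n := by
    intro n
    rw [zpow_add₀ hm1]
    norm_num
  have hpar : ∀ n : ℤ, φ 0 n 1 = c₁ + c₂ * ((-1:ℝ)) ^ n := by
    have key : ∀ n : ℤ, (φ 0 n 1 = c₁ + c₂ * ((-1:ℝ)) ^ n) ∧
        (φ 0 (n+1) 1 = c₁ + c₂ * ((-1:ℝ)) ^ (n+1)) := by
      intro n
      induction n using Int.induction_on with
      | zero =>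
        constructor
        · rw [hc₁, hc₂]; norm_num; ring
        · rw [hc₁, hc₂]; norm_num; ring
      | succ i ih =>
        refine ⟨ih.2, ?_⟩
        have e1 : (i : ℤ) + 1 + 1 = (i : ℤ) + 2 := by ring
        rw [e1, hA2 i, hstep i]
        exact ih.1
      | pred i ih =>
        constructor
        · have h2 := hA2 (-(i:ℤ) - 1)
          have e1 : -(i:ℤ) - 1 + 2 = -(i:ℤ) + 1 := by ring
          rw [e1] at h2
          rw [← h2, ih.2]
          rw [← hstep (-(i:ℤ) - 1), e1]
        · have e2 : -(i:ℤ) - 1 + 1 = -(i:ℤ) := by ring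
          rw [e2]
          exact ih.1
    exact fun n => (key n).1
  refine ⟨c₁, c₂, fun n => ξ 0 n 1, ?_⟩
  intro t n a ha
  have hneg : ((-1:ℝ)) ^ (n + 1) = -((-1:ℝ)) ^ n := by
    rw [zpow_add_one₀ hm1]
    ring
  constructor
  · rw [hξconst t n a ha, hξ1 t n, hpar (n+1), hneg]
    ring
  · rw [hB t n a ha, hAconst t n, hpar n]
end

section
/- For the compound pendulum lattice equation u'' + a u − (b + cn)(u₁ − u) + (b + c(n−1))(u − u₋₁) = 0 with a > 0, the identity D_t(cos(√a t)·u' + √a sin(√a t)·u) + (S − id)(−cos(√a t)(b + c(n−1))(u − u₋₁)) = cos(√a t)·(u'' + a u − (b + cn)(u₁ − u) + (b + c(n−1))(u − u₋₁)) holds identically for every u : ℝ × ℤ → ℝ twice differentiable in t; hence the left-hand side vanishes on solutions. -/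
/-- Conservation law of the compound pendulum lattice equation with
characteristic cos(√a t):
D_t(cos(√a t)u' + √a sin(√a t)u) + (S − id)(−cos(√a t)(b + c(n−1))(u − u₋₁))
  = cos(√a t)·(u'' + a u − (b + cn)(u₁ − u) + (b + c(n−1))(u − u₋₁)). -/
theorem pendulum_lattice_conservation (a b c : ℝ) (ha : 0 < a)
    (u : ℝ → ℤ → ℝ)
    (hd : ∀ n, Differentiable ℝ (fun t => u t n))
    (hd2 : ∀ n, Differentiable ℝ (fun t => deriv (fun s => u s n) t)) :
    ∀ t (n : ℤ),
      deriv (fun s => Real.cos (Real.sqrt a * s) * deriv (fun r => u r n) s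
          + Real.sqrt a * Real.sin (Real.sqrt a * s) * u s n) t
      + ((-Real.cos (Real.sqrt a * t) * (b + c * (((n + 1 : ℤ) : ℝ) - 1))
            * (u t (n + 1) - u t ((n + 1) - 1)))
          - (-Real.cos (Real.sqrt a * t) * (b + c * ((n : ℝ) - 1))
              * (u t n - u t (n - 1))))
      = Real.cos (Real.sqrt a * t) *
          (deriv (fun s => deriv (fun r => u r n) s) t + a * u t n
            - (b + c * (n : ℝ)) * (u t (n + 1) - u t n)
            + (b + c * ((n : ℝ) - 1)) * (u t n - u t (n - 1))) := by
  intro t n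
  have hlin : HasDerivAt (fun s : ℝ => Real.sqrt a * s) (Real.sqrt a) t := by
    simpa using (hasDerivAt_id t).const_mul (Real.sqrt a)
  have hcos : HasDerivAt (fun s : ℝ => Real.cos (Real.sqrt a * s))
      (-Real.sin (Real.sqrt a * t) * Real.sqrt a) t := hlin.cos
  have hsin : HasDerivAt (fun s : ℝ => Real.sin (Real.sqrt a * s))
      (Real.cos (Real.sqrt a * t) * Real.sqrt a) t := hlin.sin
  have hu : HasDerivAt (fun s => u s n) (deriv (fun s => u s n) t) t :=
    (hd n t).hasDerivAt
  have hu2 : HasDerivAt (fun s => deriv (fun r => u r n) s)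
      (deriv (fun s => deriv (fun r => u r n) s) t) t :=
    (hd2 n t).hasDerivAt
  have H : HasDerivAt (fun s => Real.cos (Real.sqrt a * s) * deriv (fun r => u r n) s
        + Real.sqrt a * Real.sin (Real.sqrt a * s) * u s n)
      ((-Real.sin (Real.sqrt a * t) * Real.sqrt a) * deriv (fun r => u r n) t
        + Real.cos (Real.sqrt a * t) * deriv (fun s => deriv (fun r => u r n) s) t
        + ((Real.sqrt a * (Real.cos (Real.sqrt a * t) * Real.sqrt a)) * u t n
          + Real.sqrt a * Real.sin (Real.sqrt a * t) * deriv (fun s => u s n) t)) t := by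
    exact (hcos.mul hu2).add (((hsin.const_mul (Real.sqrt a)).mul hu))
  rw [H.deriv]
  have hsq : Real.sqrt a * Real.sqrt a = a := Real.mul_self_sqrt ha.le
  have h1 : ((n : ℝ) + 1) - 1 = (n : ℝ) := by ring
  push_cast
  rw [show (n : ℝ) + 1 - 1 = (n : ℝ) by ring]
  have : (n : ℤ) + 1 - 1 = n := by ring
  rw [this]
  linear_combination (Real.cos (Real.sqrt a * t) * u t n) * hsq
end
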